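/- arXiv:0709.3547 — 3 statements merged into one kernel-verified Lean document; each statement's English description precedes it below -/
import Mathlib

section
/- The number of permutation matrices P of size 2q (viewed as 2×2 arrays of q×q blocks) such that the partial transpose P^{Γ_2} is again a permutation matrix equals q!·(q+1)!. -/
/-- Partial transpose of a block matrix indexed by `Fin p × Fin q`. -/
def ptrans {p q : ℕ} (M : Matrix (Fin p × Fin q) (Fin p × Fin q) ℝ) :
    Matrix (Fin p × Fin q) (Fin p × Fin q) ℝ :=
  fun x y => M (x.1, y.2) (y.1, x.2)

/-- `M` is a permutation matrix. -/
def IsPermMatrix {ι : Type*} [DecidableEq ι] (M : Matrix ι ι ℝ) : Prop :=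
  ∃ σ : Equiv.Perm ι, ∀ i j, M i j = if σ i = j then 1 else 0

namespace PtransAux

open Equiv Nat

/-! ### Facts about permutations of `Fin 2` -/

lemma fin2_eq_of_apply_eq : ∀ (π ρ : Equiv.Perm (Fin 2)), π 0 = ρ 0 → π = ρ := by decide

lemma fin2_eq_of_ne_one : ∀ (π ρ : Equiv.Perm (Fin 2)), π ≠ 1 → ρ ≠ 1 → π = ρ := by decide

lemma fin2_apply_eq_of_ne : ∀ (π ρ : Equiv.Perm (Fin 2)), π ≠ ρ → π 0 = ρ 1 := by decide

/-! ### The parametrization of good permutations -/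

variable {q : ℕ}

/-- The underlying function of the permutation built from parameters. -/
def mkFun (g : Fin 2 → Perm (Fin q)) (δ : Fin q → Perm (Fin 2)) :
    Fin 2 × Fin q → Fin 2 × Fin q :=
  fun x => (δ x.2 x.1, g x.1 x.2)

/-- The compatibility condition. -/
def Cond (g : Fin 2 → Perm (Fin q)) (δ : Fin q → Perm (Fin 2)) : Prop :=
  ∀ s, δ ((g 0)⁻¹ s) = δ ((g 1)⁻¹ s)

lemma mkFun_injective {g : Fin 2 → Perm (Fin q)} {δ : Fin q → Perm (Fin 2)}
    (h : Cond g δ) : Function.Injective (mkFun g δ) := by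
  rintro ⟨a, t⟩ ⟨a', t'⟩ heq
  simp only [mkFun, Prod.mk.injEq] at heq
  obtain ⟨h1, h2⟩ := heq
  by_cases haa : a = a'
  · subst haa
    exact Prod.ext rfl ((g a).injective h2)
  · exfalso
    have hs : (g a')⁻¹ (g a t) = t' := by rw [h2]; exact Equiv.symm_apply_apply _ _
    have e : δ ((g a)⁻¹ (g a t)) = δ ((g a')⁻¹ (g a t)) := by
      fin_cases a <;> fin_cases a' <;> first | rfl | exact h _ | exact (h _).symm
    rw [show ∀ (f : Perm (Fin q)) x, f⁻¹ (f x) = x from fun f x => f.symm_apply_apply x, hs] at e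
    rw [e] at h1
    exact haa ((δ t').injective h1)

/-- The permutation built from parameters satisfying the condition. -/
noncomputable def mkPerm {g : Fin 2 → Perm (Fin q)} {δ : Fin q → Perm (Fin 2)}
    (h : Cond g δ) : Perm (Fin 2 × Fin q) :=
  Equiv.ofBijective _ (Finite.injective_iff_bijective.1 (mkFun_injective h))

lemma mkPerm_apply {g : Fin 2 → Perm (Fin q)} {δ : Fin q → Perm (Fin 2)}
    (h : Cond g δ) (x : Fin 2 × Fin q) : mkPerm h x = (δ x.2 x.1, g x.1 x.2) := rfl

/-- A permutation is good if its partial transpose is (row of) a permutation. -/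
def Good (σ : Perm (Fin 2 × Fin q)) : Prop :=
  ∃ τ : Perm (Fin 2 × Fin q), ∀ x y : Fin 2 × Fin q,
    σ (x.1, y.2) = (y.1, x.2) ↔ τ x = y

/-- The function underlying the witness `τ`. -/
def tauFun (g : Fin 2 → Perm (Fin q)) (δ : Fin q → Perm (Fin 2)) :
    Fin 2 × Fin q → Fin 2 × Fin q :=
  fun x => (δ ((g x.1)⁻¹ x.2) x.1, (g x.1)⁻¹ x.2)

lemma tauFun_injective (g : Fin 2 → Perm (Fin q)) (δ : Fin q → Perm (Fin 2)) :
    Function.Injective (tauFun g δ) := by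
  rintro ⟨a, s⟩ ⟨a', s'⟩ heq
  simp only [tauFun, Prod.mk.injEq] at heq
  obtain ⟨h1, h2⟩ := heq
  rw [h2] at h1
  have ha : a = a' := (δ ((g a')⁻¹ s')).injective h1
  subst ha
  have : s = s' := by
    have := congrArg (g a) h2
    simpa using this
  exact Prod.ext rfl this

noncomputable def tauPerm (g : Fin 2 → Perm (Fin q)) (δ : Fin q → Perm (Fin 2)) :
    Perm (Fin 2 × Fin q) :=
  Equiv.ofBijective _ (Finite.injective_iff_bijective.1 (tauFun_injective g δ))

lemma good_mkPerm {g : Fin 2 → Perm (Fin q)} {δ : Fin q → Perm (Fin 2)}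
    (h : Cond g δ) : Good (mkPerm h) := by
  refine ⟨tauPerm g δ, ?_⟩
  rintro ⟨a, s⟩ ⟨b, t⟩
  show (δ t a, g a t) = (b, s) ↔ (δ ((g a)⁻¹ s) a, (g a)⁻¹ s) = (b, t)
  simp only [Prod.mk.injEq]
  constructor
  · rintro ⟨rfl, rfl⟩
    simp
  · rintro ⟨rfl, rfl⟩
    simp

lemma exists_param {σ : Perm (Fin 2 × Fin q)} (hσ : Good σ) :
    ∃ (g : Fin 2 → Perm (Fin q)) (δ : Fin q → Perm (Fin 2)) (h : Cond g δ),
      mkPerm h = σ := by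
  obtain ⟨τ, hτ⟩ := hσ
  have key : ∀ a s b t, σ (a, t) = (b, s) ↔ τ (a, s) = (b, t) :=
    fun a s b t => hτ (a, s) (b, t)
  -- the permutations g a
  have Ginj : ∀ a : Fin 2, Function.Injective (fun t => (σ (a, t)).2) := by
    intro a t t' h
    have h' : (σ (a, t)).2 = (σ (a, t')).2 := h
    have h1 : σ (a, t) = ((σ (a, t)).1, (σ (a, t)).2) := rfl
    have h2 : σ (a, t') = ((σ (a, t')).1, (σ (a, t)).2) := by
      rw [h']
    have k1 := (key a (σ (a, t)).2 (σ (a, t)).1 t).1 h1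
    have k2 := (key a (σ (a, t)).2 (σ (a, t')).1 t').1 h2
    rw [k2] at k1
    exact (Prod.mk.injEq _ _ _ _ ▸ k1.symm).2
  have Dinj : ∀ t : Fin q, Function.Injective (fun a : Fin 2 => (σ (a, t)).1) := by
    intro t a a' h
    have h' : (σ (a, t)).1 = (σ (a', t)).1 := h
    have h1 : σ (a, t) = ((σ (a, t)).1, (σ (a, t)).2) := rfl
    have h2 : σ (a', t) = ((σ (a, t)).1, (σ (a', t)).2) := by
      rw [h']
    have k1 := (key a (σ (a, t)).2 (σ (a, t)).1 t).1 h1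
    have k2 := (key a' (σ (a', t)).2 (σ (a, t)).1 t).1 h2
    rw [← k2] at k1
    exact (Prod.mk.injEq _ _ _ _ ▸ τ.injective k1).1
  set g : Fin 2 → Perm (Fin q) :=
    fun a => Equiv.ofBijective _ (Finite.injective_iff_bijective.1 (Ginj a)) with hg
  set δ : Fin q → Perm (Fin 2) :=
    fun t => Equiv.ofBijective _ (Finite.injective_iff_bijective.1 (Dinj t)) with hδ
  have happly : ∀ a t, σ (a, t) = (δ t a, g a t) := fun a t => rfl
  have hcond : Cond g δ := by
    intro s
    by_contra hne
    have hb : δ ((g 0)⁻¹ s) 0 = δ ((g 1)⁻¹ s) 1 := fin2_apply_eq_of_ne _ _ hne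
    have e0 : σ (0, (g 0)⁻¹ s) = (δ ((g 0)⁻¹ s) 0, s) := by
      rw [happly]
      congr 1
      exact (g 0).apply_symm_apply s
    have e1 : σ (1, (g 1)⁻¹ s) = (δ ((g 0)⁻¹ s) 0, s) := by
      rw [happly, hb]
      congr 1
      exact (g 1).apply_symm_apply s
    have := σ.injective (e0.trans e1.symm)
    simp [Prod.ext_iff] at this
  refine ⟨g, δ, hcond, ?_⟩
  apply Equiv.ext
  intro x
  rw [mkPerm_apply]
  exact (happly x.1 x.2).symm

/-! ### From matrices to good permutations -/

/-- The permutation matrix of `σ`. -/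
def pmat {ι : Type*} [DecidableEq ι] (σ : Perm ι) : Matrix ι ι ℝ :=
  fun i j => if σ i = j then 1 else 0

lemma pmat_injective {ι : Type*} [DecidableEq ι] :
    Function.Injective (pmat (ι := ι)) := by
  intro σ σ' h
  apply Equiv.ext
  intro i
  by_contra hne
  have h2 := congrFun (congrFun h i) (σ i)
  simp only [pmat, if_pos rfl, if_neg (fun hh : σ' i = σ i => hne hh.symm)] at h2
  exact one_ne_zero h2

lemma ite_eq_ite_iff {A B : Prop} [Decidable A] [Decidable B]
    (h : (if A then (1:ℝ) else 0) = if B then 1 else 0) : A ↔ B := by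
  by_cases hA : A <;> by_cases hB : B <;> simp_all

lemma mem_set_iff (P : Matrix (Fin 2 × Fin q) (Fin 2 × Fin q) ℝ) :
    (IsPermMatrix P ∧ IsPermMatrix (ptrans P)) ↔
      ∃ σ : Perm (Fin 2 × Fin q), Good σ ∧ P = pmat σ := by
  constructor
  · rintro ⟨⟨σ, hσ⟩, ⟨τ, hτ⟩⟩
    have hP : P = pmat σ := by
      ext i j
      exact hσ i j
    refine ⟨σ, ⟨τ, fun x y => ?_⟩, hP⟩
    have := hτ x y
    rw [hP] at this
    exact ite_eq_ite_iff this
  · rintro ⟨σ, ⟨τ, hτ⟩, rfl⟩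
    refine ⟨⟨σ, fun i j => rfl⟩, ⟨τ, fun x y => ?_⟩⟩
    show (if σ (x.1, y.2) = (y.1, x.2) then (1:ℝ) else 0) = _
    rw [if_congr (hτ x y) rfl rfl]

/-! ### Counting -/

/-- The parameter type. -/
def Param (q : ℕ) : Type :=
  {x : (Fin 2 → Perm (Fin q)) × (Fin q → Perm (Fin 2)) // Cond x.1 x.2}

noncomputable instance : Fintype (Param q) := by
  unfold Param Cond; infer_instance

noncomputable def paramToGood (x : Param q) : {σ : Perm (Fin 2 × Fin q) // Good σ} :=
  ⟨mkPerm x.2, good_mkPerm x.2⟩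

lemma paramToGood_bijective : Function.Bijective (paramToGood (q := q)) := by
  constructor
  · rintro ⟨⟨g, δ⟩, hx⟩ ⟨⟨g', δ'⟩, hx'⟩ h
    have h' : ∀ a t, ((δ t a : Fin 2), (g a t : Fin q)) = (δ' t a, g' a t) := by
      intro a t
      have := congrArg (fun σ => σ.1.toFun (a, t)) h
      exact this
    simp only [Prod.mk.injEq] at h'
    apply Subtype.ext
    refine Prod.ext_iff.mpr ⟨?_, ?_⟩
    · funext a; exact Equiv.ext fun t => (h' a t).2
    · funext t; exact Equiv.ext fun a => (h' a t).1
  · rintro ⟨σ, hσ⟩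
    obtain ⟨g, δ, h, hmk⟩ := exists_param hσ
    exact ⟨⟨⟨g, δ⟩, h⟩, Subtype.ext hmk⟩

/-- Second component of the reparametrized type. -/
def ParamB (q : ℕ) : Type :=
  {y : (Fin q → Perm (Fin 2)) × Perm (Fin q) // ∀ t, y.1 (y.2 t) = y.1 t}

noncomputable instance : Fintype (ParamB q) := by
  unfold ParamB; infer_instance

def paramEquiv : Param q ≃ Perm (Fin q) × ParamB q where
  toFun x := (x.1.1 1, ⟨(x.1.2, (x.1.1 0)⁻¹ * x.1.1 1), by
    intro t
    have := x.2 (x.1.1 1 t)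
    simpa using this⟩)
  invFun y := ⟨(![y.1 * (y.2.1.2)⁻¹, y.1], y.2.1.1), by
    intro s
    simp only [Matrix.cons_val_zero, Matrix.cons_val_one, Matrix.head_cons, mul_inv_rev, inv_inv]
    have := y.2.2 ((y.1)⁻¹ s)
    simpa using this⟩
  left_inv := by
    rintro ⟨⟨g, δ⟩, hx⟩
    apply Subtype.ext
    simp only [Prod.mk.injEq]
    constructor
    · funext a
      fin_cases a <;> simp
    · trivial
  right_inv := by
    rintro ⟨k, ⟨⟨δ, h⟩, hy⟩⟩
    simp only [Prod.mk.injEq]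
    refine Prod.ext_iff.mpr ⟨?_, ?_⟩
    · simp
    · apply Subtype.ext
      simp only [Prod.mk.injEq]
      constructor
      · trivial
      · simp only [Matrix.cons_val_zero, Matrix.cons_val_one, Matrix.head_cons]
        group

/-- Permutations preserving a two-valued coloring. -/
def stabEquiv (δ : Fin q → Perm (Fin 2)) :
    {h : Perm (Fin q) // ∀ t, δ (h t) = δ t} ≃
      Perm {t : Fin q // δ t = 1} × Perm {t : Fin q // ¬ δ t = 1} where
  toFun x :=
    (x.1.subtypePerm (fun t => by rw [x.2 t]),
     x.1.subtypePerm (fun t => by rw [x.2 t]))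
  invFun y := ⟨y.1.subtypeCongr y.2, by
    intro t
    rw [Perm.subtypeCongr.apply]
    by_cases ht : δ t = 1
    · rw [dif_pos ht, (y.1 ⟨t, ht⟩).2, ht]
    · rw [dif_neg ht]
      exact fin2_eq_of_ne_one _ _ (y.2 ⟨t, ht⟩).2 ht⟩
  left_inv := by
    rintro ⟨h, hh⟩
    apply Subtype.ext
    apply Equiv.ext
    intro t
    rw [Perm.subtypeCongr.apply]
    by_cases ht : δ t = 1
    · rw [dif_pos ht]; rfl
    · rw [dif_neg ht]; rfl
  right_inv := by
    rintro ⟨ep, en⟩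
    refine Prod.ext_iff.mpr ⟨?_, ?_⟩
    · apply Equiv.ext
      rintro ⟨t, ht⟩
      apply Subtype.ext
      show (ep.subtypeCongr en) t = _
      rw [Perm.subtypeCongr.apply, dif_pos ht]
    · apply Equiv.ext
      rintro ⟨t, ht⟩
      apply Subtype.ext
      show (ep.subtypeCongr en) t = _
      rw [Perm.subtypeCongr.apply, dif_neg ht]

/-- The coloring associated to `δ`. -/
def colorSet (δ : Fin q → Perm (Fin 2)) : Finset (Fin q) :=
  Finset.univ.filter (fun t => δ t = 1)

lemma colorSet_bijective :
    Function.Bijective (colorSet (q := q)) := by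
  constructor
  · intro δ δ' h
    funext t
    by_cases ht : δ t = 1
    · have : t ∈ colorSet δ' := by rw [← h]; simp [colorSet, ht]
      simp only [colorSet, Finset.mem_filter] at this
      rw [ht, this.2]
    · have : t ∉ colorSet δ' := by rw [← h]; simp [colorSet, ht]
      simp only [colorSet, Finset.mem_filter, Finset.mem_univ, true_and] at this
      exact fin2_eq_of_ne_one _ _ ht this
  · intro s
    refine ⟨fun t => if t ∈ s then 1 else Equiv.swap 0 1, ?_⟩
    ext t
    simp only [colorSet, Finset.mem_filter, Finset.mem_univ, true_and]
    by_cases ht : t ∈ s <;> simp [ht]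

lemma card_stab (δ : Fin q → Perm (Fin 2)) :
    Nat.card {h : Perm (Fin q) // ∀ t, δ (h t) = δ t}
      = (colorSet δ).card ! * (q - (colorSet δ).card) ! := by
  rw [Nat.card_congr (stabEquiv δ), Nat.card_prod]
  have h1 : Nat.card {t : Fin q // δ t = 1} = (colorSet δ).card := by
    rw [Nat.card_eq_fintype_card, Fintype.card_subtype]
    rfl
  have h2 : Nat.card {t : Fin q // ¬ δ t = 1} = q - (colorSet δ).card := by
    rw [Nat.card_eq_fintype_card, Fintype.card_subtype_compl, Fintype.card_fin]
    congr 1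
    rw [Fintype.card_subtype]
    rfl
  rw [Nat.card_eq_fintype_card, Nat.card_eq_fintype_card, Fintype.card_perm, Fintype.card_perm,
    ← Nat.card_eq_fintype_card, ← Nat.card_eq_fintype_card, h1, h2]

lemma card_paramB : Nat.card (ParamB q) = (q + 1)! := by
  have e2 : ParamB q ≃ Σ δ : Fin q → Perm (Fin 2), {h : Perm (Fin q) // ∀ t, δ (h t) = δ t} := by
    unfold ParamB
    exact Equiv.subtypeProdEquivSigmaSubtype
      (fun (δ : Fin q → Perm (Fin 2)) (h : Perm (Fin q)) => ∀ t, δ (h t) = δ t)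
  rw [Nat.card_congr e2, Nat.card_eq_fintype_card, Fintype.card_sigma]
  have : ∀ δ : Fin q → Perm (Fin 2),
      Fintype.card {h : Perm (Fin q) // ∀ t, δ (h t) = δ t}
        = (colorSet δ).card ! * (q - (colorSet δ).card) ! := by
    intro δ
    rw [← Nat.card_eq_fintype_card]
    exact card_stab δ
  rw [Finset.sum_congr rfl (fun δ _ => this δ)]
  rw [Fintype.sum_bijective colorSet colorSet_bijective _
    (fun s : Finset (Fin q) => s.card ! * (q - s.card)!) (fun _ => rfl)]
  rw [← Finset.powerset_univ, Finset.sum_powerset_apply_card (fun k => k ! * (q - k)!),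
    Finset.card_univ, Fintype.card_fin]
  have : ∀ m ∈ Finset.range (q + 1), q.choose m • (m ! * (q - m)!) = q ! := by
    intro m hm
    rw [Finset.mem_range, Nat.lt_succ_iff] at hm
    rw [smul_eq_mul, ← mul_assoc, Nat.choose_mul_factorial_mul_factorial hm]
  rw [Finset.sum_congr rfl this, Finset.sum_const, Finset.card_range, smul_eq_mul,
    Nat.factorial_succ]

lemma card_param : Nat.card (Param q) = q ! * (q + 1)! := by
  rw [Nat.card_congr (paramEquiv (q := q)), Nat.card_prod, card_paramB,
    Nat.card_eq_fintype_card, Fintype.card_perm, Fintype.card_fin]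

end PtransAux

open PtransAux in
/-- The number of `2q × 2q` permutation matrices whose partial transpose (with
respect to `q × q` blocks) is again a permutation matrix equals `q! (q+1)!`. -/
theorem card_perm_ptrans_perm_two (q : ℕ) :
    {P : Matrix (Fin 2 × Fin q) (Fin 2 × Fin q) ℝ |
        IsPermMatrix P ∧ IsPermMatrix (ptrans P)}.ncard
      = Nat.factorial q * Nat.factorial (q + 1) := by
  have hset : {P : Matrix (Fin 2 × Fin q) (Fin 2 × Fin q) ℝ |
      IsPermMatrix P ∧ IsPermMatrix (ptrans P)} = pmat '' {σ | Good σ} := by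
    ext P
    rw [Set.mem_setOf_eq, mem_set_iff]
    constructor
    · rintro ⟨σ, hσ, rfl⟩; exact ⟨σ, hσ, rfl⟩
    · rintro ⟨σ, hσ, rfl⟩; exact ⟨σ, hσ, rfl⟩
  rw [hset, Set.ncard_image_of_injective _ pmat_injective]
  have : {σ : Equiv.Perm (Fin 2 × Fin q) | Good σ}.ncard
      = Nat.card {σ : Equiv.Perm (Fin 2 × Fin q) // Good σ} :=
    (Nat.card_coe_set_eq _).symm
  rw [this, ← Nat.card_eq_of_bijective _ paramToGood_bijective, card_param]
end

section
/- The counting function is symmetric in the block parameters: the number of permutation matrices P of size pq (with q×q blocks) whose partial transpose P^{Γ_p} is a permutation matrix equals the number of permutation matrices P' of size pq (with p×p blocks, viewing the matrix as a q×q array of p×p blocks) whose partial transpose P'^{Γ_q} is a permutation matrix. The bijection sends a matrix P with 1 at position (a·p + i, b·p + j) (0 ≤ a,b ≤ q−1, 1 ≤ i,j ≤ p) to the matrix P' with 1 at position ((i−1)·q + (a+1), (j−1)·q + (b+1)). -/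
def Fmap {p q : ℕ} (P : Matrix (Fin p × Fin q) (Fin p × Fin q) ℝ) :
    Matrix (Fin q × Fin p) (Fin q × Fin p) ℝ :=
  fun x y => P x.swap y.swap

lemma Fmap_Fmap {p q : ℕ} (P : Matrix (Fin p × Fin q) (Fin p × Fin q) ℝ) :
    Fmap (Fmap P) = P := rfl

lemma isPerm_transpose {ι : Type*} [DecidableEq ι] {M : Matrix ι ι ℝ}
    (h : IsPermMatrix M) : IsPermMatrix M.transpose := by
  obtain ⟨σ, hσ⟩ := h
  refine ⟨σ.symm, fun i j => ?_⟩
  rw [Matrix.transpose_apply, hσ]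
  by_cases h : σ.symm i = j
  · rw [if_pos h, if_pos (by rw [← h]; exact σ.apply_symm_apply i)]
  · have : σ j ≠ i := fun hh => h (by simp [← hh])
    rw [if_neg this, if_neg h]

lemma isPerm_Fmap {p q : ℕ} {P : Matrix (Fin p × Fin q) (Fin p × Fin q) ℝ}
    (h : IsPermMatrix P) : IsPermMatrix (Fmap P) := by
  obtain ⟨σ, hσ⟩ := h
  refine ⟨(Equiv.prodComm (Fin q) (Fin p)).trans
      (σ.trans (Equiv.prodComm (Fin p) (Fin q))), fun i j => ?_⟩
  simp only [Fmap, hσ, Equiv.trans_apply, Equiv.prodComm_apply]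
  congr 1
  simp [Prod.ext_iff, and_comm]

lemma ptrans_Fmap {p q : ℕ} (P : Matrix (Fin p × Fin q) (Fin p × Fin q) ℝ) :
    ptrans (Fmap P) = (Fmap (ptrans P)).transpose := rfl

lemma Fmap_injective {p q : ℕ} :
    Function.Injective (@Fmap p q) := fun P P' h => by
  funext x y
  have := congrFun (congrFun h x.swap) y.swap
  simpa [Fmap] using this

/-- `Z(p,q) = Z(q,p)`: the number of permutation matrices of size `pq` (with
`q × q` blocks) whose partial transpose is a permutation matrix equals the
number of permutation matrices of size `pq` (with `p × p` blocks) whose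
partial transpose is a permutation matrix. -/
theorem Z_symm (p q : ℕ) :
    {P : Matrix (Fin p × Fin q) (Fin p × Fin q) ℝ |
        IsPermMatrix P ∧ IsPermMatrix (ptrans P)}.ncard
      = {P : Matrix (Fin q × Fin p) (Fin q × Fin p) ℝ |
          IsPermMatrix P ∧ IsPermMatrix (ptrans P)}.ncard := by
  rw [← Set.ncard_image_of_injective _ (@Fmap_injective p q)]
  congr 1
  ext Q
  constructor
  · rintro ⟨P, ⟨h1, h2⟩, rfl⟩
    exact ⟨isPerm_Fmap h1, by rw [ptrans_Fmap]; exact isPerm_transpose (isPerm_Fmap h2)⟩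
  · rintro ⟨h1, h2⟩
    refine ⟨Fmap Q, ⟨isPerm_Fmap h1, ?_⟩, Fmap_Fmap Q⟩
    rw [ptrans_Fmap]
    exact isPerm_transpose (isPerm_Fmap h2)
end

section
/- Let P be a permutation matrix of size pq partitioned into p² blocks B_{i,j} of size q×q, and let A_{i,j} ⊆ [q] (resp. B'_{i,j} ⊆ [q]) be the set of relative row (resp. column) indices of the 1-entries in block B_{i,j}. Then the partial transpose P^{Γ_p} is a permutation matrix if and only if: for each fixed i, the sets A_{i,1},…,A_{i,p} partition [q] and also for each fixed j, the sets A_{1,j},…,A_{p,j} partition [q]; and similarly the sets B'_{i,j} partition [q] along both rows and columns of blocks. -/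
/-- For a permutation matrix `P` with blocks `B_{i,j}` and block row/column
index sets `A i j` / `B' i j`, the partial transpose of `P` is a permutation
matrix iff the `A i j` partition `[q]` along both block rows and block
columns, and similarly for the `B' i j`. -/
theorem ptrans_perm_iff_partitions {p q : ℕ}
    (P : Matrix (Fin p × Fin q) (Fin p × Fin q) ℝ) (hperm : IsPermMatrix P)
    (A B' : Fin p → Fin p → Set (Fin q))
    (hA : ∀ i j, A i j = {r : Fin q | ∃ c : Fin q, P (i, r) (j, c) = 1})
    (hB : ∀ i j, B' i j = {c : Fin q | ∃ r : Fin q, P (i, r) (j, c) = 1}) :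
    IsPermMatrix (ptrans P) ↔
      ((∀ i : Fin p, (⋃ j, A i j) = Set.univ ∧
          ∀ j₁ j₂ : Fin p, j₁ ≠ j₂ → Disjoint (A i j₁) (A i j₂)) ∧
       (∀ j : Fin p, (⋃ i, A i j) = Set.univ ∧
          ∀ i₁ i₂ : Fin p, i₁ ≠ i₂ → Disjoint (A i₁ j) (A i₂ j)) ∧
       (∀ i : Fin p, (⋃ j, B' i j) = Set.univ ∧
          ∀ j₁ j₂ : Fin p, j₁ ≠ j₂ → Disjoint (B' i j₁) (B' i j₂)) ∧
       (∀ j : Fin p, (⋃ i, B' i j) = Set.univ ∧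
          ∀ i₁ i₂ : Fin p, i₁ ≠ i₂ → Disjoint (B' i₁ j) (B' i₂ j))) := by
  classical
  obtain ⟨σ, hσ⟩ := hperm
  have hP : ∀ x y, P x y = 1 ↔ σ x = y := by
    intro x y
    rw [hσ]
    split <;> simp_all
  have hAmem : ∀ i j (r : Fin q), r ∈ A i j ↔ (σ (i, r)).1 = j := by
    intro i j r
    rw [hA]
    simp only [Set.mem_setOf_eq, hP]
    constructor
    · rintro ⟨c, hc⟩
      rw [hc]
    · intro h
      exact ⟨(σ (i, r)).2, by rw [← h]⟩
  have hBmem : ∀ i j (c : Fin q), c ∈ B' i j ↔ ∃ r, σ (i, r) = (j, c) := by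
    intro i j c
    rw [hB]
    simp only [Set.mem_setOf_eq, hP]
  constructor
  · rintro ⟨τ, hτ⟩
    have hQ : ∀ x y, ptrans P x y = 1 ↔ τ x = y := by
      intro x y
      rw [hτ]
      split <;> simp_all
    have key : ∀ (i : Fin p) (r : Fin q) (j : Fin p) (c : Fin q),
        τ (i, r) = (j, c) ↔ σ (i, c) = (j, r) := by
      intro i r j c
      rw [← hQ]
      exact hP (i, c) (j, r)
    refine ⟨?_, ?_, ?_, ?_⟩
    · intro i
      refine ⟨?_, ?_⟩
      · ext r
        simp only [Set.mem_iUnion, Set.mem_univ, iff_true]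
        exact ⟨(σ (i, r)).1, (hAmem _ _ _).mpr rfl⟩
      · intro j₁ j₂ hne
        rw [Set.disjoint_left]
        intro r h1 h2
        exact hne (((hAmem i j₁ r).mp h1).symm.trans ((hAmem i j₂ r).mp h2))
    · intro j
      refine ⟨?_, ?_⟩
      · ext r
        simp only [Set.mem_iUnion, Set.mem_univ, iff_true]
        rcases hx : τ.symm (j, r) with ⟨i, r'⟩
        have h := τ.apply_symm_apply (j, r)
        rw [hx] at h
        have h2 := (key i r' j r).mp h
        exact ⟨i, (hAmem i j r).mpr (by rw [h2])⟩
      · intro i₁ i₂ hne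
        rw [Set.disjoint_left]
        intro r h1 h2
        have e1 : σ (i₁, r) = (j, (σ (i₁, r)).2) :=
          Prod.ext ((hAmem _ _ _).mp h1) rfl
        have e2 : σ (i₂, r) = (j, (σ (i₂, r)).2) :=
          Prod.ext ((hAmem _ _ _).mp h2) rfl
        have t1 := (key i₁ (σ (i₁, r)).2 j r).mpr e1
        have t2 := (key i₂ (σ (i₂, r)).2 j r).mpr e2
        have := τ.injective (t1.trans t2.symm)
        exact hne (congrArg Prod.fst this)
    · intro i
      refine ⟨?_, ?_⟩
      · ext c
        simp only [Set.mem_iUnion, Set.mem_univ, iff_true]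
        rcases hx : τ (i, c) with ⟨j, r⟩
        have h := (key i c j r).mp hx
        exact ⟨j, (hBmem i j c).mpr ⟨r, h⟩⟩
      · intro j₁ j₂ hne
        rw [Set.disjoint_left]
        intro c h1 h2
        obtain ⟨r₁, hr₁⟩ := (hBmem i j₁ c).mp h1
        obtain ⟨r₂, hr₂⟩ := (hBmem i j₂ c).mp h2
        have t1 := (key i c j₁ r₁).mpr hr₁
        have t2 := (key i c j₂ r₂).mpr hr₂
        rw [t1] at t2
        exact hne (congrArg Prod.fst t2)
    · intro j
      have hBmem' : ∀ i (c : Fin q), c ∈ B' i j ↔ (σ.symm (j, c)).1 = i := by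
        intro i c
        rw [hBmem]
        constructor
        · rintro ⟨r, hr⟩
          rw [← hr, Equiv.symm_apply_apply]
        · intro h
          refine ⟨(σ.symm (j, c)).2, ?_⟩
          rw [← h]
          simp
      refine ⟨?_, ?_⟩
      · ext c
        simp only [Set.mem_iUnion, Set.mem_univ, iff_true]
        exact ⟨(σ.symm (j, c)).1, (hBmem' _ _).mpr rfl⟩
      · intro i₁ i₂ hne
        rw [Set.disjoint_left]
        intro c h1 h2
        exact hne (((hBmem' i₁ c).mp h1).symm.trans ((hBmem' i₂ c).mp h2))
  · rintro ⟨h1, h2, h3, h4⟩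
    -- surjectivity of i ↦ (σ (i, r)).1 for each r, from h2
    have hsurj2 : ∀ (r : Fin q), Function.Surjective (fun i => (σ (i, r)).1) := by
      intro r j
      have hr : r ∈ ⋃ i, A i j := (h2 j).1 ▸ Set.mem_univ r
      obtain ⟨i, hmem⟩ := Set.mem_iUnion.mp hr
      exact ⟨i, (hAmem i j r).mp hmem⟩
    have hinj2 : ∀ r, Function.Injective (fun i => (σ (i, r)).1) :=
      fun r => Finite.injective_iff_surjective.mpr (hsurj2 r)
    -- bijectivity of r ↦ (σ (i, r)).2 for each i, from h3
    have hsurj3 : ∀ (i : Fin p), Function.Surjective (fun r : Fin q => (σ (i, r)).2) := by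
      intro i c
      have hc : c ∈ ⋃ j, B' i j := (h3 i).1 ▸ Set.mem_univ c
      obtain ⟨j, hmem⟩ := Set.mem_iUnion.mp hc
      obtain ⟨r, hr⟩ := (hBmem i j c).mp hmem
      exact ⟨r, by show (σ (i, r)).2 = c; rw [hr]⟩
    have hbij3 : ∀ i, Function.Bijective (fun r : Fin q => (σ (i, r)).2) :=
      fun i => ⟨Finite.injective_iff_surjective.mpr (hsurj3 i), hsurj3 i⟩
    let e : Fin p → Equiv (Fin q) (Fin q) := fun i => Equiv.ofBijective _ (hbij3 i)
    have heapp : ∀ i (c : Fin q), e i c = (σ (i, c)).2 := fun i c => rfl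
    have hechar : ∀ i (r : Fin q), (σ (i, (e i).symm r)).2 = r := by
      intro i r
      rw [← heapp i ((e i).symm r), Equiv.apply_symm_apply]
    let f : Fin p × Fin q → Fin p × Fin q :=
      fun x => ((σ (x.1, (e x.1).symm x.2)).1, (e x.1).symm x.2)
    have finj : Function.Injective f := by
      rintro ⟨i₁, r₁⟩ ⟨i₂, r₂⟩ hfe
      simp only [f, Prod.mk.injEq] at hfe
      obtain ⟨hj, hc⟩ := hfe
      rw [← hc] at hj
      have hi : i₁ = i₂ := hinj2 _ hj
      subst hi
      have hr : r₁ = r₂ := (e i₁).symm.injective hc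
      rw [hr]
    have fbij : Function.Bijective f := Finite.injective_iff_bijective.mp finj
    refine ⟨Equiv.ofBijective f fbij, ?_⟩
    rintro ⟨i, r⟩ ⟨j, c⟩
    have hiff : σ (i, c) = (j, r) ↔ f (i, r) = (j, c) := by
      constructor
      · intro h
        have hc : (e i).symm r = c := by
          apply (e i).injective
          rw [Equiv.apply_symm_apply, heapp, h]
        show ((σ (i, (e i).symm r)).1, (e i).symm r) = (j, c)
        rw [hc, h]
      · intro h
        have hj : (σ (i, (e i).symm r)).1 = j := congrArg Prod.fst h
        have hc : (e i).symm r = c := congrArg Prod.snd h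
        have h2 : (σ (i, c)).2 = r := by rw [← hc]; exact hechar i r
        rw [← hc]
        exact Prod.ext hj (hechar i r)
    show P (i, c) (j, r) = if Equiv.ofBijective f fbij (i, r) = (j, c) then 1 else 0
    rw [hσ, Equiv.ofBijective_apply]
    exact if_congr hiff rfl rfl
end
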